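/- Let M be a model with world set W and let R⁰ ⊆ (𝒯∖ℱ)×W be any relation on non-formula terms. Then there exists a relation R^ω ⊆ 𝒯×W such that R^ω ∩ ((𝒯∖ℱ)×W) = R⁰ and, for all formulas φ and worlds w ∈ W, (φ,w) ∈ R^ω if and only if M(R^ω),w ⊨ φ. -/
import Mathlib


mutual
inductive SigTerm (Ag Pr : Type) (Op : ℕ → Type) : Type where
  | agent : Ag → SigTerm Ag Pr Op
  | op : (n : ℕ) → Op n → (Fin n → SigTerm Ag Pr Op) → SigTerm Ag Pr Op
  | ofFormula : SigFormula Ag Pr Op → SigTerm Ag Pr Op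

inductive SigFormula (Ag Pr : Type) (Op : ℕ → Type) : Type where
  | atom : Pr → SigFormula Ag Pr Op
  | neg : SigFormula Ag Pr Op → SigFormula Ag Pr Op
  | and : SigFormula Ag Pr Op → SigFormula Ag Pr Op → SigFormula Ag Pr Op
  | entails : SigTerm Ag Pr Op → SigFormula Ag Pr Op → SigFormula Ag Pr Op
  | signs : Ag → SigTerm Ag Pr Op → SigFormula Ag Pr Op
  | says : Ag → SigFormula Ag Pr Op → SigFormula Ag Pr Op
end

namespace SigFormula
variable {Ag Pr : Type} {Op : ℕ → Type}
/-- `φ → ψ` abbreviates `¬(φ ∧ ¬ψ)`. -/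
def imp (φ ψ : SigFormula Ag Pr Op) : SigFormula Ag Pr Op := .neg (.and φ (.neg ψ))
end SigFormula

structure SigModel (Ag Pr : Type) (Op : ℕ → Type) (W : Type) where
  Rsig : W → Ag → SigTerm Ag Pr Op → Prop
  Rent : SigTerm Ag Pr Op → W → Prop
  Rsays : W → Ag → W → Prop
  val : W → Pr → Prop

variable {Ag Pr : Type} {Op : ℕ → Type} {W : Type}

def Sat (M : SigModel Ag Pr Op W) : W → SigFormula Ag Pr Op → Prop
  | w, .atom p => M.val w p
  | w, .neg φ => ¬ Sat M w φ
  | w, .and φ ψ => Sat M w φ ∧ Sat M w ψ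
  | w, .entails t φ => ∀ w' : W, M.Rent t w' → Sat M w' φ
  | w, .signs A t => M.Rsig w A t
  | w, .says A φ => ∀ w' : W, M.Rsays w A w' → Sat M w' φ

def Valid (M : SigModel Ag Pr Op W) (φ : SigFormula Ag Pr Op) : Prop :=
  ∀ w : W, Sat M w φ

/-- SC1: for every formula `φ` and world `w`, `(φ,w) ∈ R_⊳` implies `M,w ⊨ φ`. -/
def SC1 (M : SigModel Ag Pr Op W) : Prop :=
  ∀ (φ : SigFormula Ag Pr Op) (w : W), M.Rent (.ofFormula φ) w → Sat M w φ

/-- SC2: `(w,A,t) ∈ R_sig` and `(w,A,w') ∈ R_says` imply `(t,w') ∈ R_⊳`. -/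
def SC2 (M : SigModel Ag Pr Op W) : Prop :=
  ∀ (w : W) (A : Ag) (t : SigTerm Ag Pr Op) (w' : W),
    M.Rsig w A t → M.Rsays w A w' → M.Rent t w'

/-- SC3: `(w,B,t) ∈ R_sig` and `(w,A,w') ∈ R_says` imply `(w',B,t) ∈ R_sig`. -/
def SC3 (M : SigModel Ag Pr Op W) : Prop :=
  ∀ (w : W) (A B : Ag) (t : SigTerm Ag Pr Op) (w' : W),
    M.Rsig w B t → M.Rsays w A w' → M.Rsig w' B t

/-- `φ` is a substitution instance of a propositional tautology: every
boolean valuation of formulas that respects `¬` and `∧` makes `φ` true. -/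
def IsTaut (φ : SigFormula Ag Pr Op) : Prop :=
  ∀ v : SigFormula Ag Pr Op → Bool,
    (∀ ψ, v (.neg ψ) = !(v ψ)) →
    (∀ ψ χ, v (.and ψ χ) = (v ψ && v χ)) →
    v φ = true

/-- Derivability in the signature logic. -/
inductive Deriv {Ag Pr : Type} {Op : ℕ → Type} : SigFormula Ag Pr Op → Prop where
  | ax1 {φ} : IsTaut φ → Deriv φ
  | ax2 (φ : SigFormula Ag Pr Op) : Deriv (.entails (.ofFormula φ) φ)
  | ax3 (t : SigTerm Ag Pr Op) (φ ψ) :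
      Deriv (((SigFormula.entails t φ).and (.entails t (φ.imp ψ))).imp (.entails t ψ))
  | ax4 (A : Ag) (t : SigTerm Ag Pr Op) (φ) :
      Deriv (((SigFormula.signs A t).and (.entails t φ)).imp (.says A φ))
  | ax5 (A : Ag) (φ ψ) :
      Deriv (((SigFormula.says A φ).and (.says A (φ.imp ψ))).imp (.says A ψ))
  | ax6 (A B : Ag) (t : SigTerm Ag Pr Op) :
      Deriv ((SigFormula.signs B t).imp (.says A (.signs B t)))
  | ax7 (A : Ag) (t : SigTerm Ag Pr Op) (φ) :
      Deriv ((SigFormula.entails t φ).imp (.says A (.entails t φ)))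
  | r1 {φ ψ} : Deriv φ → Deriv (φ.imp ψ) → Deriv ψ
  | r2 (t : SigTerm Ag Pr Op) {φ} : Deriv φ → Deriv (.entails t φ)
  | r3 (A : Ag) {φ} : Deriv φ → Deriv (.says A φ)

/-- The model obtained from `M` by replacing the entailment relation by `R`. -/
def SigModel.withEnt (M : SigModel Ag Pr Op W) (R : SigTerm Ag Pr Op → W → Prop) :
    SigModel Ag Pr Op W := { M with Rent := R }

/-- The semantic operator corresponding to `G says`, on sets of worlds. -/
def GSaysStep (M : SigModel Ag Pr Op W) (G : Finset Ag) (X : Set W) : Set W :=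
  {w | ∀ A ∈ G, ∀ w' : W, M.Rsays w A w' → w' ∈ X}

/-- The set of worlds of `M` where `G says^k φ` holds (`k ≥ 1`). -/
def GSaysK (M : SigModel Ag Pr Op W) (G : Finset Ag) (φ : SigFormula Ag Pr Op) (k : ℕ) : Set W :=
  (GSaysStep M G)^[k] {w | Sat M w φ}

/-- The set of worlds of `M` where `G saysᵂ φ` holds. -/
def GSaysOmega (M : SigModel Ag Pr Op W) (G : Finset Ag) (φ : SigFormula Ag Pr Op) : Set W :=
  {w | ∀ k ≥ 1, w ∈ GSaysK M G φ k}

mutual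
/-- Entailment depth of a term. -/
def SigTerm.depth : SigTerm Ag Pr Op → ℕ
  | .agent _ => 0
  | .op _ _ _ => 0
  | .ofFormula φ => φ.depth
/-- Entailment depth of a formula. -/
def SigFormula.depth : SigFormula Ag Pr Op → ℕ
  | .atom _ => 1
  | .neg φ => φ.depth
  | .and φ ψ => max φ.depth ψ.depth
  | .entails t φ => max t.depth φ.depth + 1
  | .signs _ _ => 1
  | .says _ φ => φ.depth
end

/-- `R ≡_k R'`: the relations agree on all terms of entailment depth at most `k`. -/
def EquivK (R R' : SigTerm Ag Pr Op → W → Prop) (k : ℕ) : Prop :=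
  ∀ (t : SigTerm Ag Pr Op) (w : W), t.depth ≤ k → (R t w ↔ R' t w)

/-- The sequence `R⁰ ⊆ R¹ ⊆ ⋯` of approximations to `R^ω`. -/
def RSeq (M : SigModel Ag Pr Op W) (R0 : SigTerm Ag Pr Op → W → Prop) :
    ℕ → SigTerm Ag Pr Op → W → Prop
  | 0 => R0
  | i + 1 => fun t w => RSeq M R0 i t w ∨
      ∃ φ : SigFormula Ag Pr Op, t = .ofFormula φ ∧ φ.depth = i + 1 ∧
        Sat (M.withEnt (RSeq M R0 i)) w φ

/-- The limit `R^ω = ⋃_i R^i`. -/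
def ROmega (M : SigModel Ag Pr Op W) (R0 : SigTerm Ag Pr Op → W → Prop) :
    SigTerm Ag Pr Op → W → Prop :=
  fun t w => ∃ i, RSeq M R0 i t w

lemma SigFormula.depth_pos : ∀ φ : SigFormula Ag Pr Op, 1 ≤ φ.depth
  | .atom _ => le_refl _
  | .neg φ => by simpa [SigFormula.depth] using SigFormula.depth_pos φ
  | .and φ ψ => by
      have := SigFormula.depth_pos φ
      simp [SigFormula.depth]; omega
  | .entails t φ => by simp [SigFormula.depth]
  | .signs _ _ => le_refl _
  | .says _ φ => by simpa [SigFormula.depth] using SigFormula.depth_pos φ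

lemma sat_congr (M : SigModel Ag Pr Op W) (R R' : SigTerm Ag Pr Op → W → Prop) (n : ℕ)
    (h : ∀ t w, SigTerm.depth t < n → (R t w ↔ R' t w)) :
    ∀ (φ : SigFormula Ag Pr Op), φ.depth ≤ n → ∀ w,
      (Sat (M.withEnt R) w φ ↔ Sat (M.withEnt R') w φ)
  | .atom p, _, w => Iff.rfl
  | .neg φ, hd, w => by
      simp only [Sat]
      exact not_congr
        (sat_congr M R R' n h φ (by simpa [SigFormula.depth] using hd) w)
  | .and φ ψ, hd, w => by
      simp only [Sat, SigFormula.depth] at *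
      exact and_congr (sat_congr M R R' n h φ (by omega) w)
        (sat_congr M R R' n h ψ (by omega) w)
  | .entails t φ, hd, w => by
      simp only [Sat, SigFormula.depth, SigModel.withEnt] at *
      constructor
      · intro H w' hw'
        exact (sat_congr M R R' n h φ (by omega) w').mp
          (H w' ((h t w' (by omega)).mpr hw'))
      · intro H w' hw'
        exact (sat_congr M R R' n h φ (by omega) w').mpr
          (H w' ((h t w' (by omega)).mp hw'))
  | .signs A t, _, w => Iff.rfl
  | .says A φ, hd, w => by
      simp only [Sat, SigFormula.depth, SigModel.withEnt] at *
      constructor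
      · intro H w' hw'
        exact (sat_congr M R R' n h φ (by omega) w').mp (H w' hw')
      · intro H w' hw'
        exact (sat_congr M R R' n h φ (by omega) w').mpr (H w' hw')

lemma rseq_le (M : SigModel Ag Pr Op W) (R0 : SigTerm Ag Pr Op → W → Prop)
    {i j : ℕ} (hij : i ≤ j) {t : SigTerm Ag Pr Op} {w : W}
    (h : RSeq M R0 i t w) : RSeq M R0 j t w := by
  induction j with
  | zero => simpa [Nat.le_zero.mp hij] using h
  | succ j ih =>
    rcases Nat.lt_or_ge i (j+1) with hlt | hge
    · exact Or.inl (ih (Nat.lt_succ_iff.mp hlt))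
    · have : i = j + 1 := le_antisymm hij hge
      subst this; exact h

lemma rseq_stable (M : SigModel Ag Pr Op W) (R0 : SigTerm Ag Pr Op → W → Prop) :
    ∀ (j i : ℕ), i ≤ j → ∀ (t : SigTerm Ag Pr Op) (w : W), t.depth ≤ i →
      (RSeq M R0 j t w ↔ RSeq M R0 i t w) := by
  intro j
  induction j with
  | zero => intro i hi t w _; simp [Nat.le_zero.mp hi]
  | succ j ih =>
    intro i hi t w hd
    rcases Nat.lt_or_ge i (j+1) with hlt | hge
    · have hij : i ≤ j := Nat.lt_succ_iff.mp hlt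
      rw [← ih i hij t w hd]
      constructor
      · rintro (h | ⟨φ, rfl, hdep, _⟩)
        · exact h
        · exfalso
          have : SigTerm.depth (SigTerm.ofFormula φ : SigTerm Ag Pr Op) = φ.depth := rfl
          omega
      · exact Or.inl
    · have : i = j + 1 := le_antisymm hi hge
      subst this; exact Iff.rfl

lemma romega_eq (M : SigModel Ag Pr Op W) (R0 : SigTerm Ag Pr Op → W → Prop)
    {i : ℕ} {t : SigTerm Ag Pr Op} {w : W} (hd : t.depth ≤ i) :
    ROmega M R0 t w ↔ RSeq M R0 i t w := by
  constructor
  · rintro ⟨j, hj⟩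
    rcases Nat.le_total j i with h | h
    · exact rseq_le M R0 h hj
    · exact (rseq_stable M R0 j i h t w hd).mp hj
  · intro h; exact ⟨i, h⟩

lemma rseq_formula (M : SigModel Ag Pr Op W) (R0 : SigTerm Ag Pr Op → W → Prop)
    (hR0 : ∀ (φ : SigFormula Ag Pr Op) (w : W), ¬ R0 (.ofFormula φ) w) :
    ∀ (i : ℕ) (φ : SigFormula Ag Pr Op) (w : W),
      RSeq M R0 i (.ofFormula φ) w ↔
        (φ.depth ≤ i ∧ Sat (M.withEnt (ROmega M R0)) w φ) := by
  intro i
  induction i with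
  | zero =>
    intro φ w
    constructor
    · intro h; exact absurd h (hR0 φ w)
    · rintro ⟨h1, _⟩; have := SigFormula.depth_pos φ; omega
  | succ i ih =>
    intro φ w
    have hcong : ∀ (t : SigTerm Ag Pr Op) (w' : W), t.depth ≤ i →
        (RSeq M R0 i t w' ↔ ROmega M R0 t w') := by
      intro t w' hd; exact (romega_eq M R0 hd).symm
    constructor
    · rintro (h | ⟨ψ, hψ, hdep, hsat⟩)
      · obtain ⟨h1, h2⟩ := (ih φ w).mp h
        exact ⟨Nat.le_succ_of_le h1, h2⟩
      · obtain rfl : φ = ψ := by cases hψ; rfl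
        refine ⟨le_of_eq hdep, ?_⟩
        exact (sat_congr M (RSeq M R0 i) (ROmega M R0) (i+1)
          (fun t w' hlt => hcong t w' (Nat.lt_succ_iff.mp hlt))
          φ (le_of_eq hdep) w).mp hsat
    · rintro ⟨h1, h2⟩
      rcases Nat.lt_or_ge φ.depth (i+1) with hlt | hge
      · exact Or.inl ((ih φ w).mpr ⟨Nat.lt_succ_iff.mp hlt, h2⟩)
      · have hdep : φ.depth = i + 1 := le_antisymm h1 hge
        refine Or.inr ⟨φ, rfl, hdep, ?_⟩
        exact (sat_congr M (RSeq M R0 i) (ROmega M R0) (i+1)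
          (fun t w' hlt => hcong t w' (Nat.lt_succ_iff.mp hlt))
          φ h1 w).mpr h2

/-- any relation `R⁰` on non-formula terms extends to a relation `R^ω` on all
terms agreeing with `R⁰` on non-formula terms and such that a formula `φ` is `R^ω`-related
to `w` iff `M(R^ω),w ⊨ φ`. -/
theorem extend_entailment_relation (M : SigModel Ag Pr Op W)
    (R0 : SigTerm Ag Pr Op → W → Prop)
    (hR0 : ∀ (φ : SigFormula Ag Pr Op) (w : W), ¬ R0 (.ofFormula φ) w) :
    ∃ R : SigTerm Ag Pr Op → W → Prop,
      (∀ (t : SigTerm Ag Pr Op) (w : W),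
        (∀ φ : SigFormula Ag Pr Op, t ≠ .ofFormula φ) → (R t w ↔ R0 t w)) ∧
      (∀ (φ : SigFormula Ag Pr Op) (w : W),
        R (.ofFormula φ) w ↔ Sat (M.withEnt R) w φ) := by
  refine ⟨ROmega M R0, ?_, ?_⟩
  · intro t w ht
    constructor
    · rintro ⟨i, hi⟩
      induction i with
      | zero => exact hi
      | succ i ih =>
        rcases hi with h | ⟨φ, rfl, _, _⟩
        · exact ih h
        · exact absurd rfl (ht φ)
    · intro h; exact ⟨0, h⟩
  · intro φ w
    constructor
    · rintro ⟨i, hi⟩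
      exact ((rseq_formula M R0 hR0 i φ w).mp hi).2
    · intro h
      exact ⟨φ.depth, (rseq_formula M R0 hR0 φ.depth φ w).mpr ⟨le_refl _, h⟩⟩
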